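/- arXiv:2506.15963 — 3 statements merged into one kernel-verified Lean document; each statement's English description precedes it below -/
import Mathlib

section
/- Let n, p, m be positive natural numbers and let W_p be a real p×n matrix whose columns are unit vectors with pairwise nonpositive inner products, i.e. (W_pᵀ W_p)_{ii} = 1 for all i and (W_pᵀ W_p)_{ij} ≤ 0 for all i ≠ j. Let x ∈ ℝ^n be a nonnegative vector with at most one nonzero coordinate (a 1-sparse nonnegative input). Then the SAE weight matrix W_pᵀ achieves zero pointwise SAE loss at x, and this is pointwise optimal: ‖W_p x − W_p ReLU(W_pᵀ W_p x)‖² = 0 ≤ ‖W_p x − W_mᵀ ReLU(W_m W_p x)‖² for every real m×p matrix W_m, where ReLU is applied entrywise and ‖·‖ is the Euclidean norm. -/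
open Matrix

noncomputable section

/-- ReLU activation. -/
def ReLU (t : ℝ) : ℝ := max t 0

/-- Squared Euclidean norm of a vector. -/
def sqnorm {k : ℕ} (v : Fin k → ℝ) : ℝ := ∑ i, (v i) ^ 2

/-- for columns that are unit vectors with pairwise nonpositive inner
products and a nonnegative 1-sparse input `x`, the SAE weight matrix `W_pᵀ`
achieves zero pointwise SAE loss at `x`, which is pointwise optimal over all
`m × p` SAE weight matrices. -/
theorem one_sparse_zero_loss_optimal
    (n p m : ℕ) (hn : 0 < n) (hp : 0 < p) (hm : 0 < m)
    (Wp : Matrix (Fin p) (Fin n) ℝ)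
    (hdiag : ∀ i : Fin n, (Wpᵀ * Wp) i i = 1)
    (hoff : ∀ i j : Fin n, i ≠ j → (Wpᵀ * Wp) i j ≤ 0)
    (x : Fin n → ℝ) (hx : ∀ i, 0 ≤ x i)
    (hsparse : ∀ i j : Fin n, x i ≠ 0 → x j ≠ 0 → i = j) :
    sqnorm (Wp.mulVec x - Wp.mulVec (fun i => ReLU ((Wpᵀ * Wp).mulVec x i))) = 0
    ∧ ∀ Wm : Matrix (Fin m) (Fin p) ℝ,
        sqnorm (Wp.mulVec x - Wp.mulVec (fun i => ReLU ((Wpᵀ * Wp).mulVec x i)))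
          ≤ sqnorm (Wp.mulVec x - Wmᵀ.mulVec (fun i => ReLU (Wm.mulVec (Wp.mulVec x) i))) := by
  have key : (fun i => ReLU ((Wpᵀ * Wp).mulVec x i)) = x := by
    funext i
    by_cases hex : ∃ k, x k ≠ 0
    · obtain ⟨k, hk⟩ := hex
      have hsum : (Wpᵀ * Wp).mulVec x i = (Wpᵀ * Wp) i k * x k := by
        rw [mulVec]
        simp only [dotProduct]
        rw [Finset.sum_eq_single k]
        · intro j _ hj
          have : x j = 0 := by
            by_contra h
            exact hj (hsparse j k h hk)
          simp [this]
        · intro h; exact absurd (Finset.mem_univ k) h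
      by_cases hik : i = k
      · subst hik
        rw [hsum, hdiag, one_mul, ReLU, max_eq_left (hx i)]
      · have hxi : x i = 0 := by
          by_contra h
          exact hik (hsparse i k h hk)
        have : (Wpᵀ * Wp) i k * x k ≤ 0 :=
          mul_nonpos_of_nonpos_of_nonneg (hoff i k hik) (hx k)
        rw [hsum, ReLU, max_eq_right this, hxi]
    · push_neg at hex
      have hx0 : x = 0 := funext fun j => hex j
      simp [hx0, mulVec, dotProduct, ReLU]
  have hzero : sqnorm (Wp.mulVec x - Wp.mulVec (fun i => ReLU ((Wpᵀ * Wp).mulVec x i))) = 0 := by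
    rw [key]
    simp [sqnorm]
  refine ⟨hzero, fun Wm => ?_⟩
  rw [hzero]
  exact Finset.sum_nonneg fun i _ => sq_nonneg _
end
end

section
/- Let W be a real 2×2 matrix. Then Wᵀ · (W.map ReLU) = I₂ (where ReLU is applied entrywise to W and I₂ is the 2×2 identity matrix) if and only if W = I₂ or W is the 2×2 swap (transposition) permutation matrix [[0,1],[1,0]]. In other words, the solutions of the SAE stationarity equation I = W_mᵀ σ(W_m) in dimension 2 are exactly the identity up to a row reordering. -/
open Matrix

noncomputable section

/-- in dimension 2, the solutions of the SAE stationarity equation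
`I = W_mᵀ σ(W_m)` (with `σ = ReLU` entrywise) are exactly the identity matrix
and the swap permutation matrix. -/
theorem stationarity_solutions_dim_two
    (W : Matrix (Fin 2) (Fin 2) ℝ) :
    Wᵀ * (W.map ReLU) = 1 ↔ W = 1 ∨ W = !![0, 1; 1, 0] := by
  constructor
  · intro h
    have h00 := congrFun (congrFun h 0) 0
    have h01 := congrFun (congrFun h 0) 1
    have h10 := congrFun (congrFun h 1) 0
    have h11 := congrFun (congrFun h 1) 1
    simp [Matrix.mul_apply, Fin.sum_univ_two, Matrix.transpose_apply,
      Matrix.map_apply, Matrix.one_apply, ReLU] at h00 h01 h10 h11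
    rcases le_or_gt (W 0 0) 0 with ha | ha
    · rw [max_eq_right ha] at h00 h10
      rcases le_or_gt (W 1 0) 0 with hc | hc
      · rw [max_eq_right hc] at h00; nlinarith
      · rw [max_eq_left hc.le] at h00 h10
        have hc1 : W 1 0 = 1 := by nlinarith
        rw [hc1] at h00 h10 h01
        have hd0 : W 1 1 = 0 := by nlinarith
        rw [hd0] at h11 h01
        norm_num at h11
        rcases le_or_gt (W 0 1) 0 with hb | hb
        · rw [max_eq_right hb] at h11; nlinarith
        · rw [max_eq_left hb.le] at h11 h01
          have hb1 : W 0 1 = 1 := by nlinarith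
          rw [hb1] at h01
          norm_num at h01
          have ha0 : W 0 0 = 0 := h01
          right
          ext i j
          fin_cases i <;> fin_cases j <;> simp_all
    · rw [max_eq_left ha.le] at h00 h10
      rcases le_or_gt (W 0 1) 0 with hb | hb
      · rw [max_eq_right hb] at h01 h11
        rcases le_or_gt (W 1 0) 0 with hc | hc
        · rw [max_eq_right hc] at h00 h10
          have ha1 : W 0 0 = 1 := by nlinarith
          have hb0 : W 0 1 = 0 := by nlinarith
          rcases le_or_gt (W 1 1) 0 with hd | hd
          · rw [max_eq_right hd] at h11; nlinarith
          · rw [max_eq_left hd.le] at h11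
            have hd1 : W 1 1 = 1 := by nlinarith
            rw [ha1, hd1] at h01
            norm_num at h01
            have hc0 : W 1 0 = 0 := by nlinarith
            left
            ext i j
            fin_cases i <;> fin_cases j <;> simp_all [Matrix.one_apply]
        · rw [max_eq_left hc.le] at h00 h10
          have hmd : max (W 1 1) 0 = 0 := by
            rcases le_or_gt (W 1 1) 0 with hd | hd
            · exact max_eq_right hd
            · rw [max_eq_left hd.le] at h01; nlinarith
          rw [hmd] at h11; nlinarith
      · rw [max_eq_left hb.le] at h01 h11
        rcases le_or_gt (W 1 0) 0 with hc | hc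
        · rw [max_eq_right hc] at h10; nlinarith
        · rw [max_eq_left hc.le] at h10
          have hd : W 1 1 < 0 := by nlinarith
          rw [max_eq_right hd.le] at h01; nlinarith
  · rintro (rfl | rfl) <;>
      · ext i j
        fin_cases i <;> fin_cases j <;>
          simp [Matrix.mul_apply, Fin.sum_univ_two, Matrix.map_apply,
            Matrix.transpose_apply, Matrix.one_apply, ReLU, Matrix.vecHead,
            Matrix.vecTail]
end
end

section
/- Let n, p be positive natural numbers, let W_p be a real p×n matrix, and suppose the columns of W_p form a digon geometry: there is an involution g : {1,…,n} → {1,…,n} (g ∘ g = id) such that the Gram matrix G = W_pᵀ W_p satisfies G_{ii} = 1 for all i, G_{i,g(i)} = −1 whenever g(i) ≠ i, and G_{ij} = 0 for all j ∉ {i, g(i)}. Then for every vector x ∈ ℝ^n with nonnegative entries, the SAE with weight matrix W_m = W_pᵀ exactly reconstructs the polysemantic input: W_p ReLU(W_pᵀ W_p x) = W_p x (ReLU applied entrywise), so the pointwise SAE loss ‖W_p x − W_p ReLU(W_pᵀ W_p x)‖² equals 0; in particular W_m = W_pᵀ is a global minimizer of the SAE loss on nonnegative inputs. -/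
open Matrix

noncomputable section

/-- if the columns of `W_p` form a digon geometry (an involution `g`
pairing antipodal unit columns, distinct pairs orthogonal), then on every
nonnegative input the SAE with weight matrix `W_pᵀ` exactly reconstructs the
polysemantic input, achieves zero pointwise SAE loss, and is a global minimizer
of the pointwise SAE loss. -/
theorem digon_exact_reconstruction
    (n p : ℕ) (hn : 0 < n) (hp : 0 < p)
    (Wp : Matrix (Fin p) (Fin n) ℝ)
    (g : Fin n → Fin n) (hg : g ∘ g = id)
    (hdiag : ∀ i : Fin n, (Wpᵀ * Wp) i i = 1)
    (hpair : ∀ i : Fin n, g i ≠ i → (Wpᵀ * Wp) i (g i) = -1)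
    (hzero : ∀ i j : Fin n, j ≠ i → j ≠ g i → (Wpᵀ * Wp) i j = 0)
    (x : Fin n → ℝ) (hx : ∀ i, 0 ≤ x i) :
    Wp.mulVec (fun i => ReLU ((Wpᵀ * Wp).mulVec x i)) = Wp.mulVec x
    ∧ sqnorm (Wp.mulVec x - Wp.mulVec (fun i => ReLU ((Wpᵀ * Wp).mulVec x i))) = 0
    ∧ ∀ Wm : Matrix (Fin n) (Fin p) ℝ,
        sqnorm (Wp.mulVec x - Wp.mulVec (fun i => ReLU ((Wpᵀ * Wp).mulVec x i)))
          ≤ sqnorm (Wp.mulVec x - Wmᵀ.mulVec (fun i => ReLU (Wm.mulVec (Wp.mulVec x) i))) := by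
  have hgg : ∀ i, g (g i) = i := fun i => congrFun hg i
  set G := Wpᵀ * Wp with hG
  -- value of G.mulVec v at i
  have hsum : ∀ (v : Fin n → ℝ) (i : Fin n),
      G.mulVec v i = if g i = i then v i else v i - v (g i) := by
    intro v i
    by_cases h : g i = i
    · simp only [if_pos h]
      have : G.mulVec v i = ∑ j, G i j * v j := rfl
      rw [this, Finset.sum_eq_single i]
      · rw [hdiag i]; ring
      · intro j _ hj
        rw [hzero i j hj (by rw [h]; exact hj)]; ring
      · simp
    · simp only [if_neg h]
      have expand : G.mulVec v i = ∑ j, G i j * v j := rfl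
      rw [expand, ← Finset.sum_subset (Finset.subset_univ ({i, g i} : Finset (Fin n)))]
      · rw [Finset.sum_pair (Ne.symm h)]
        rw [hdiag i, hpair i h]; ring
      · intro j _ hj
        simp only [Finset.mem_insert, Finset.mem_singleton, not_or] at hj
        rw [hzero i j hj.1 hj.2]; ring
  set y : Fin n → ℝ := fun i => ReLU (G.mulVec x i) with hy
  set z : Fin n → ℝ := fun i => y i - x i with hzdef
  have hz0 : ∀ i, g i = i → z i = 0 := by
    intro i h
    simp only [hzdef, hy, ReLU, hsum, if_pos h]
    have := hx i
    simp [max_eq_left this]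
  have hzsym : ∀ i, g i ≠ i → z i = z (g i) := by
    intro i h
    have h2 : g (g i) ≠ g i := by
      rw [hgg]; exact fun e => h e.symm
    have e1 : z i = max (x i - x (g i)) 0 - x i := by
      simp only [hzdef, hy, ReLU, hsum, if_neg h]
    have e2 : z (g i) = max (x (g i) - x i) 0 - x (g i) := by
      simp only [hzdef, hy, ReLU, hsum, hgg, if_neg (show i ≠ g i from fun e => h e.symm)]
    rw [e1, e2]
    rcases le_total (x i) (x (g i)) with hle | hle
    · rw [max_eq_right (by linarith), max_eq_left (by linarith)]; ring
    · rw [max_eq_left (by linarith), max_eq_right (by linarith)]; ring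
  have hGz : G.mulVec z = 0 := by
    funext i
    rw [hsum z i]
    by_cases h : g i = i
    · simp [if_pos h, hz0 i h]
    · simp [if_neg h, ← hzsym i h]
  have hWz : Wp.mulVec z = 0 := by
    have hnorm : ∑ k, (Wp.mulVec z k) ^ 2 = 0 := by
      have : ∑ k, (Wp.mulVec z k) ^ 2 = (Wp.mulVec z) ⬝ᵥ (Wp.mulVec z) := by
        simp [dotProduct, sq]
      rw [this, Matrix.dotProduct_mulVec, ← Matrix.mulVec_transpose,
        Matrix.mulVec_mulVec, ← hG, hGz]
      simp
    funext k
    have h1 : ∀ j ∈ Finset.univ, (0:ℝ) ≤ (Wp.mulVec z j) ^ 2 := fun j _ => sq_nonneg _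
    have := (Finset.sum_eq_zero_iff_of_nonneg h1).mp hnorm k (Finset.mem_univ k)
    exact pow_eq_zero_iff (by norm_num) |>.mp this
  have hmain : Wp.mulVec y = Wp.mulVec x := by
    have hzv : Wp.mulVec (y - x) = 0 := by
      have hyx : y - x = z := rfl
      rw [hyx]; exact hWz
    rw [Matrix.mulVec_sub] at hzv
    exact sub_eq_zero.mp hzv
  refine ⟨hmain, ?_, ?_⟩
  · rw [hmain, sub_self]
    simp [sqnorm]
  · intro Wm
    rw [hmain, sub_self]
    have h0 : sqnorm (0 : Fin p → ℝ) = 0 := by simp [sqnorm]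
    rw [h0]
    exact Finset.sum_nonneg fun i _ => sq_nonneg _
end
end
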